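/- arXiv:2312.01160 — 3 statements merged into one kernel-verified Lean document; each statement's English description precedes it below -/
import Mathlib

section
/- Let R be a unital ring graded by a group Γ. Assume R is quasi-Baer: for every right ideal I of R there exists an idempotent ε ∈ R such that ann_r(I) = εR. Then R is graded quasi-Baer: for every graded right ideal I of R there exists a homogeneous idempotent ε ∈ R such that ann_r(I) = εR. -/
/-- `I` is a right ideal of `R` (as a subset). -/
def IsRightIdealSet {R : Type*} [Ring R] (I : Set R) : Prop :=
  0 ∈ I ∧ (∀ a ∈ I, ∀ b ∈ I, a + b ∈ I) ∧ (∀ a ∈ I, -a ∈ I) ∧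
    ∀ a ∈ I, ∀ x : R, a * x ∈ I

/-- The right annihilator of a subset `I` of `R`. -/
def rightAnn {R : Type*} [Ring R] (I : Set R) : Set R :=
  {x : R | ∀ a ∈ I, a * x = 0}

/-!
The right annihilator of a graded right ideal is again graded: if `a * x = 0` for all `a ∈ I`,
then `a_δ * x_γ` is the degree `δ + γ` component of `a_δ * x = 0`. The quasi-Baer idempotent `ε`
is a left identity on `ann_r(I) = εR`; comparing degree-`γ` components of `ε * x = x` for
homogeneous `x` of degree `γ` shows that its degree-zero component `ε₀` is a left identity on every
homogeneous element of `ann_r(I)`, hence on all of it. Since `ε₀ ∈ ann_r(I)` as well, `ε₀` is a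
homogeneous idempotent with `ann_r(I) = ε₀R`.
-/

open DirectSum

section Graded

variable {ι R σ : Type*} [DecidableEq ι] [SetLike σ R]

def IsGradedSet [AddCommMonoid R] [AddSubmonoidClass σ R] (𝒜 : ι → σ) [Decomposition 𝒜]
    (S : Set R) : Prop :=
  ∀ a ∈ S, ∀ i, (decompose 𝒜 a i : R) ∈ S

theorem IsGradedSet.rightAnn [AddLeftCancelMonoid ι] [Ring R] [AddSubmonoidClass σ R]
    {𝒜 : ι → σ} [GradedRing 𝒜] {I : Set R} (hI : IsGradedSet 𝒜 I) :
    IsGradedSet 𝒜 (rightAnn I) := by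
  classical
  intro x hx i a ha
  calc a * decompose 𝒜 x i
      = ∑ j ∈ (decompose 𝒜 a).support, (decompose 𝒜 a j : R) * decompose 𝒜 x i := by
        rw [← Finset.sum_mul, sum_support_decompose]
    _ = ∑ j ∈ (decompose 𝒜 a).support, (decompose 𝒜 ((decompose 𝒜 a j : R) * x) (j + i) : R) :=
        Finset.sum_congr rfl fun j _ =>
          (coe_decompose_mul_add_of_left_mem 𝒜 (SetLike.coe_mem _)).symm
    _ = 0 := Finset.sum_eq_zero fun j _ => by
        rw [hx _ (hI a ha j), decompose_zero, DirectSum.zero_apply, ZeroMemClass.coe_zero]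

variable [AddRightCancelMonoid ι] [Semiring R] [AddSubmonoidClass σ R] {𝒜 : ι → σ} [GradedRing 𝒜]

theorem coe_decompose_zero_mul_eq_self_of_mem {e x : R} {i : ι} (hx : x ∈ 𝒜 i) (he : e * x = x) :
    (decompose 𝒜 e 0 : R) * x = x := by
  rw [← coe_decompose_mul_add_of_right_mem 𝒜 hx, zero_add, he, decompose_of_mem_same 𝒜 hx]

theorem IsGradedSet.coe_decompose_zero_mul_eq_self {S : Set R} (hS : IsGradedSet 𝒜 S) {e : R}
    (he : ∀ x ∈ S, e * x = x) : ∀ x ∈ S, (decompose 𝒜 e 0 : R) * x = x := by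
  classical
  intro x hx
  conv_lhs => rw [← sum_support_decompose 𝒜 x, Finset.mul_sum]
  conv_rhs => rw [← sum_support_decompose 𝒜 x]
  exact Finset.sum_congr rfl fun i _ =>
    coe_decompose_zero_mul_eq_self_of_mem (SetLike.coe_mem _) (he _ (hS x hx i))

end Graded

theorem rightAnn_eq_of_mem_of_mul_eq_self {R : Type*} [Ring R] {I : Set R} {e : R}
    (he : e ∈ rightAnn I) (hleft : ∀ x ∈ rightAnn I, e * x = x) :
    rightAnn I = {x : R | ∃ y : R, x = e * y} := by
  ext x
  constructor
  · intro hx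
    exact ⟨x, (hleft x hx).symm⟩
  · rintro ⟨y, rfl⟩ a ha
    rw [← mul_assoc, he a ha, zero_mul]

/-- If a unital `Γ`-graded ring `R` is quasi-Baer (the right annihilator of every right
ideal is `εR` for an idempotent `ε`), then `R` is graded quasi-Baer (the right
annihilator of every graded right ideal is `εR` for a homogeneous idempotent `ε`). -/
theorem quasiBaer_implies_graded_quasiBaer
    {Γ : Type*} [AddGroup Γ] [DecidableEq Γ]
    {R : Type*} [Ring R]
    (𝒜 : Γ → AddSubgroup R) [GradedRing 𝒜]
    -- `R` is quasi-Baer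
    (hqB : ∀ I : Set R, IsRightIdealSet I →
      ∃ ε : R, ε * ε = ε ∧ rightAnn I = {x : R | ∃ y : R, x = ε * y}) :
    -- `R` is graded quasi-Baer
    ∀ I : Set R, IsRightIdealSet I →
      (∀ a ∈ I, ∀ γ : Γ, ((DirectSum.decompose 𝒜 a) γ : R) ∈ I) →
      ∃ ε : R, ε * ε = ε ∧ (∃ γ : Γ, ε ∈ 𝒜 γ) ∧
        rightAnn I = {x : R | ∃ y : R, x = ε * y} := by
  intro I hI hIgr
  obtain ⟨ε, hε, hann⟩ := hqB I hI
  have hAnngr : IsGradedSet 𝒜 (rightAnn I) := IsGradedSet.rightAnn hIgr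
  have hεleft : ∀ x ∈ rightAnn I, ε * x = x := by
    rw [hann]
    rintro _ ⟨y, rfl⟩
    rw [← mul_assoc, hε]
  have hε₀left := hAnngr.coe_decompose_zero_mul_eq_self hεleft
  have hε₀mem : (decompose 𝒜 ε 0 : R) ∈ rightAnn I := hAnngr ε (hann ▸ ⟨ε, hε.symm⟩) 0
  exact ⟨_, hε₀left _ hε₀mem, ⟨0, SetLike.coe_mem _⟩,
    rightAnn_eq_of_mem_of_mul_eq_self hε₀mem hε₀left⟩
end

section
/- Let R be a unital ring graded by a group Γ. Assume: (i) for every graded two-sided ideal J of R there exists a homogeneous idempotent ε ∈ R such that ann_l(J) = Rε; and (ii) for every two-sided ideal I of R, the right annihilator ann_r(I) is a graded two-sided ideal. Then R is quasi-Baer: for every two-sided ideal I of R there exists an idempotent ε ∈ R such that ann_r(I) = εR (indeed ann_r(I) = (1−ε')R for the homogeneous idempotent ε' with ann_l(ann_r(I)) = Rε'). -/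
/-!
Annihilators form a Galois connection, so `ann_r(ann_l(ann_r I)) = ann_r I`. By (ii) and (i),
`ann_l(ann_r I) = Rε` for a homogeneous idempotent `ε`, and the right annihilator of `Rε` is
`(1 - ε)R`, which is generated by the idempotent `1 - ε`.
-/

/-- `I` is a two-sided ideal of `R` (as a subset). -/
def IsTwoSidedIdealSet {R : Type*} [Ring R] (I : Set R) : Prop :=
  0 ∈ I ∧ (∀ a ∈ I, ∀ b ∈ I, a + b ∈ I) ∧ (∀ a ∈ I, -a ∈ I) ∧
    (∀ a ∈ I, ∀ x : R, x * a ∈ I) ∧ ∀ a ∈ I, ∀ x : R, a * x ∈ I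

/-- The left annihilator of a subset `I` of `R`. -/
def leftAnn {R : Type*} [Ring R] (I : Set R) : Set R :=
  {x : R | ∀ a ∈ I, x * a = 0}

section Annihilators

variable {R : Type*} [Ring R]

theorem subset_leftAnn_rightAnn (I : Set R) :
    I ⊆ leftAnn (rightAnn I) :=
  fun a ha _ hx => hx a ha

theorem rightAnn_antitone {I J : Set R} (h : I ⊆ J) :
    rightAnn J ⊆ rightAnn I :=
  fun _ hx a ha => hx a (h ha)

theorem rightAnn_leftAnn_rightAnn (I : Set R) :
    rightAnn (leftAnn (rightAnn I)) = rightAnn I :=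
  (rightAnn_antitone (subset_leftAnn_rightAnn I)).antisymm fun _ hx _ ha => ha _ hx

theorem rightAnn_setOf_mul_eq_setOf_one_sub_mul {ε : R} (hε : IsIdempotentElem ε) :
    rightAnn {x : R | ∃ y : R, x = y * ε} = {x : R | ∃ y : R, x = (1 - ε) * y} := by
  ext x
  constructor
  · intro hx
    have hεx : ε * x = 0 := hx ε ⟨1, (one_mul ε).symm⟩
    exact ⟨x, by rw [sub_mul, one_mul, hεx, sub_zero]⟩
  · rintro ⟨y, rfl⟩ _ ⟨z, rfl⟩
    rw [mul_assoc, ← mul_assoc ε, hε.mul_one_sub_self, zero_mul, mul_zero]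

theorem rightAnn_eq_setOf_one_sub_mul {I : Set R} {ε : R}
    (hε : IsIdempotentElem ε) (h : leftAnn (rightAnn I) = {x : R | ∃ y : R, x = y * ε}) :
    rightAnn I = {x : R | ∃ y : R, x = (1 - ε) * y} := by
  rw [← rightAnn_leftAnn_rightAnn, h, rightAnn_setOf_mul_eq_setOf_one_sub_mul hε]

end Annihilators

/-- If `R` is a unital `Γ`-graded ring such that (i) the left annihilator of every graded
two-sided ideal is `Rε` for a homogeneous idempotent `ε`, and (ii) the right annihilator
of every two-sided ideal is a graded two-sided ideal, then `R` is quasi-Baer: the right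
annihilator of every two-sided ideal `I` is `εR` for an idempotent `ε`; indeed
`ann_r(I) = (1 - ε')R` for any homogeneous idempotent `ε'` with
`ann_l(ann_r(I)) = Rε'`. -/
theorem graded_quasiBaer_implies_quasiBaer
    {Γ : Type*} [AddGroup Γ] [DecidableEq Γ]
    {R : Type*} [Ring R]
    (𝒜 : Γ → AddSubgroup R) [GradedRing 𝒜]
    -- (i) `R` is graded quasi-Baer (for two-sided ideals, stated on the left)
    (hgqB : ∀ J : Set R, IsTwoSidedIdealSet J →
      (∀ a ∈ J, ∀ γ : Γ, ((DirectSum.decompose 𝒜 a) γ : R) ∈ J) →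
      ∃ ε : R, ε * ε = ε ∧ (∃ γ : Γ, ε ∈ 𝒜 γ) ∧
        leftAnn J = {x : R | ∃ y : R, x = y * ε})
    -- (ii) the right annihilator of any two-sided ideal is a graded two-sided ideal
    (hanngr : ∀ I : Set R, IsTwoSidedIdealSet I →
      IsTwoSidedIdealSet (rightAnn I) ∧
        ∀ a ∈ rightAnn I, ∀ γ : Γ, ((DirectSum.decompose 𝒜 a) γ : R) ∈ rightAnn I) :
    -- `R` is quasi-Baer
    ∀ I : Set R, IsTwoSidedIdealSet I →
      (∃ ε : R, ε * ε = ε ∧ rightAnn I = {x : R | ∃ y : R, x = ε * y}) ∧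
      -- indeed, `ann_r(I) = (1-ε')R` for any homogeneous idempotent `ε'`
      -- with `ann_l(ann_r(I)) = Rε'`
      (∀ ε' : R, ε' * ε' = ε' → (∃ γ : Γ, ε' ∈ 𝒜 γ) →
        leftAnn (rightAnn I) = {x : R | ∃ y : R, x = y * ε'} →
        rightAnn I = {x : R | ∃ y : R, x = (1 - ε') * y}) := by
  intro I hI
  obtain ⟨hideal, hgraded⟩ := hanngr I hI
  obtain ⟨ε, hε, -, hann⟩ := hgqB (rightAnn I) hideal hgraded
  exact ⟨⟨1 - ε, IsIdempotentElem.one_sub hε, rightAnn_eq_setOf_one_sub_mul hε hann⟩,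
    fun _ hε' _ => rightAnn_eq_setOf_one_sub_mul hε'⟩
end

section
/- Let E be a directed graph and let H ⊆ E⁰. Then H^⊥ = E⁰ − R(H) is a hereditary set, and if in addition H is hereditary, then no vertex belongs to both B_H and B_{H^⊥}; that is, B_{H^⊥} ∩ B_H = ∅. Consequently, for any S ⊆ B_H one has B_{H^⊥} − S = B_{H^⊥}. -/
/- A directed graph is given by a vertex type `V`, an edge type `E`, and source and
range maps `s r : E → V`. -/

/-- `Reaches s r u w` : there is a (possibly trivial) path from `u` to `w`. -/
def Reaches {V E : Type*} (s r : E → V) : V → V → Prop :=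
  Relation.ReflTransGen (fun u w => ∃ e : E, s e = u ∧ r e = w)

/-- A set `H` of vertices is hereditary if the range of any path with source in `H`
is in `H`. -/
def IsHereditary {V E : Type*} (s r : E → V) (H : Set V) : Prop :=
  ∀ u w : V, Reaches s r u w → u ∈ H → w ∈ H

/-- The root `R(W)` of a set `W` of vertices: the vertices which emit a (possibly
trivial) path into `W`. -/
def Root {V E : Type*} (s r : E → V) (W : Set V) : Set V :=
  {v : V | ∃ w ∈ W, Reaches s r v w}

/-- The set `B_H` of breaking vertices of `H`: infinite emitters outside of `H` which
emit a nonzero finite number of edges into the complement of `H`. -/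
def Breaking {V E : Type*} (s r : E → V) (H : Set V) : Set V :=
  {v : V | v ∉ H ∧ (s ⁻¹' {v}).Infinite ∧
    (s ⁻¹' {v} ∩ r ⁻¹' Hᶜ).Nonempty ∧ (s ⁻¹' {v} ∩ r ⁻¹' Hᶜ).Finite}

theorem subset_root {V E : Type*} (s r : E → V) (W : Set V) : W ⊆ Root s r W :=
  fun w hw => ⟨w, hw, Relation.ReflTransGen.refl⟩

theorem isHereditary_compl_root {V E : Type*} (s r : E → V) (W : Set V) :
    IsHereditary s r (Root s r W)ᶜ := by
  rintro u w huw hu ⟨x, hx, hwx⟩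
  exact hu ⟨x, hx, huw.trans hwx⟩

theorem disjoint_compl_root {V E : Type*} (s r : E → V) (W : Set V) :
    Disjoint (Root s r W)ᶜ W :=
  disjoint_compl_left.mono_right (subset_root s r W)

/-- Every edge out of `v` ends outside `K` or outside `H`, so a vertex breaking for both would
emit only finitely many edges. -/
theorem disjoint_breaking_of_disjoint {V E : Type*} (s r : E → V) {K H : Set V}
    (hKH : Disjoint K H) : Disjoint (Breaking s r K) (Breaking s r H) := by
  rw [Set.disjoint_left]
  rintro v ⟨-, hinf, -, hfinK⟩ ⟨-, -, -, hfinH⟩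
  have hcover : s ⁻¹' {v} ⊆ (s ⁻¹' {v} ∩ r ⁻¹' Kᶜ) ∪ (s ⁻¹' {v} ∩ r ⁻¹' Hᶜ) := by
    intro e he
    by_cases hK : r e ∈ K
    · exact Or.inr ⟨he, Set.disjoint_left.mp hKH hK⟩
    · exact Or.inl ⟨he, hK⟩
  exact hinf ((hfinK.union hfinH).subset hcover)

/-- For any `H ⊆ E⁰`, the set `H^⊥ = E⁰ − R(H)` is hereditary; and if `H` is
hereditary, then `B_{H^⊥} ∩ B_H = ∅`, so `B_{H^⊥} − S = B_{H^⊥}` for any `S ⊆ B_H`. -/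
theorem perp_hereditary_and_breaking_disjoint
    {V E : Type*} (s r : E → V) (H : Set V) :
    IsHereditary s r (Root s r H)ᶜ ∧
    (IsHereditary s r H →
      Breaking s r (Root s r H)ᶜ ∩ Breaking s r H = ∅ ∧
      ∀ S : Set V, S ⊆ Breaking s r H →
        Breaking s r (Root s r H)ᶜ \ S = Breaking s r (Root s r H)ᶜ) := by
  have hdisj : Disjoint (Breaking s r (Root s r H)ᶜ) (Breaking s r H) :=
    disjoint_breaking_of_disjoint s r (disjoint_compl_root s r H)
  refine ⟨isHereditary_compl_root s r H, fun _ => ⟨hdisj.inter_eq, fun S hS => ?_⟩⟩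
  exact (hdisj.mono_right hS).sdiff_eq_left
end
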